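/- Let n > 3 be an integer and let v be the divergence-conforming B-spline velocity field of order 3 with coefficients φ^X, φ^Y, φ^Z satisfying, for every index i = (i_X,i_Y,i_Z) ∈ {−2,…,n−1}³, the linear constraint n·(φ^X(i_X,i_Y,i_Z) − φ^X(i_X−1,i_Y,i_Z)) + n·(φ^Y(i_X,i_Y,i_Z) − φ^Y(i_X,i_Y−1,i_Z)) + n·(φ^Z(i_X,i_Y,i_Z) − φ^Z(i_X,i_Y,i_Z−1)) = 0. Then v is exactly divergence-free at every point of the continuous domain: div v(m) = 0 for every m ∈ [0,1]³. -/

import Mathlib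

/-- The quadratic uniform B-spline. -/
noncomputable def B2 (t : ℝ) : ℝ :=
  if |t| ≤ 1/2 then 3/4 - t^2
  else if |t| ≤ 3/2 then (1/2) * (3/2 - |t|)^2
  else 0

/-- The cubic uniform B-spline. -/
noncomputable def B3 (t : ℝ) : ℝ :=
  if |t| ≤ 1 then (1/6) * (4 - 3*t^2*(2 - |t|))
  else if |t| ≤ 2 then (1/6) * (2 - |t|)^3
  else 0

/-- Order-2 shifted basis function at knot index `j` on the uniform grid of spacing `1/n`. -/
noncomputable def B2j (n : ℤ) (j : ℤ) (u : ℝ) : ℝ :=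
  B2 ((n : ℝ) * u - (j : ℝ) - 3/2)

/-- Order-3 shifted basis function at knot index `j` on the uniform grid of spacing `1/n`. -/
noncomputable def B3j (n : ℤ) (j : ℤ) (u : ℝ) : ℝ :=
  B3 ((n : ℝ) * u - (j : ℝ) - 2)

/-- First component of the divergence-conforming B-spline velocity field of order 3. -/
noncomputable def vX (n : ℤ) (φ : ℤ → ℤ → ℤ → ℝ) (x y z : ℝ) : ℝ :=
  ∑ iX ∈ Finset.Icc (-3 : ℤ) (n-1), ∑ iY ∈ Finset.Icc (-2 : ℤ) (n-1),
    ∑ iZ ∈ Finset.Icc (-2 : ℤ) (n-1),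
      B3j n iX x * B2j n iY y * B2j n iZ z * φ iX iY iZ

/-- Second component of the divergence-conforming B-spline velocity field of order 3. -/
noncomputable def vY (n : ℤ) (φ : ℤ → ℤ → ℤ → ℝ) (x y z : ℝ) : ℝ :=
  ∑ iX ∈ Finset.Icc (-2 : ℤ) (n-1), ∑ iY ∈ Finset.Icc (-3 : ℤ) (n-1),
    ∑ iZ ∈ Finset.Icc (-2 : ℤ) (n-1),
      B2j n iX x * B3j n iY y * B2j n iZ z * φ iX iY iZ

/-- Third component of the divergence-conforming B-spline velocity field of order 3. -/
noncomputable def vZ (n : ℤ) (φ : ℤ → ℤ → ℤ → ℝ) (x y z : ℝ) : ℝ :=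
  ∑ iX ∈ Finset.Icc (-2 : ℤ) (n-1), ∑ iY ∈ Finset.Icc (-2 : ℤ) (n-1),
    ∑ iZ ∈ Finset.Icc (-3 : ℤ) (n-1),
      B2j n iX x * B2j n iY y * B3j n iZ z * φ iX iY iZ

/-- The divergence `∂vX/∂x + ∂vY/∂y + ∂vZ/∂z` of the divergence-conforming B-spline
velocity field at a point `(x, y, z)`. -/
noncomputable def divv (n : ℤ) (φX φY φZ : ℤ → ℤ → ℤ → ℝ) (p : ℝ × ℝ × ℝ) : ℝ :=
  deriv (fun x' : ℝ => vX n φX x' p.2.1 p.2.2) p.1 +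
  deriv (fun y' : ℝ => vY n φY p.1 y' p.2.2) p.2.1 +
  deriv (fun z' : ℝ => vZ n φZ p.1 p.2.1 z') p.2.2

/-! Writing `x₊ = max x 0`, the uniform B-splines are finite differences of truncated powers:
`B² t = ½ ∑ₖ (-1)ᵏ C(3,k) (t + 3/2 - k)₊²` and `B³ t = ⅙ ∑ₖ (-1)ᵏ C(4,k) (t + 2 - k)₊³`.
Since `(x₊³)' = 3 x₊²`, this gives `B³' t = B²(t + ½) - B²(t - ½)`, so by summation by parts the
derivative of an order-3 spline `∑ⱼ B³ⱼ cⱼ` is the order-2 spline `∑ⱼ B²ⱼ n (cⱼ - cⱼ₋₁)`; the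
boundary terms carry `B²₋₃` and `B²ₙ`, which vanish on `[0,1]`. Doing this in each direction turns
`div v` into the tensor-product quadratic spline whose coefficients are the left-hand sides of the
constraints, so it vanishes identically. -/

open Finset

lemma hasDerivAt_max_zero_pow (k : ℕ) (x : ℝ) :
    HasDerivAt (fun y : ℝ => max y 0 ^ (k + 2)) ((k + 2) * max x 0 ^ (k + 1)) x := by
  refine hasDerivAt_of_hasDerivAt_of_ne' (f := fun y : ℝ => max y 0 ^ (k + 2))
    (g := fun y : ℝ => (k + 2) * max y 0 ^ (k + 1)) (x := 0) (fun y hy => ?_)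
    (by fun_prop) (by fun_prop) x
  rcases hy.lt_or_gt with hy | hy
  · have h : (fun y : ℝ => max y 0 ^ (k + 2)) =ᶠ[nhds y] fun _ => 0 := by
      filter_upwards [Iio_mem_nhds hy] with w hw
      simp [max_eq_right hw.out.le]
    simpa [max_eq_right hy.le] using (hasDerivAt_const y (0 : ℝ)).congr_of_eventuallyEq h
  · have h : (fun y : ℝ => max y 0 ^ (k + 2)) =ᶠ[nhds y] fun w => w ^ (k + 2) := by
      filter_upwards [Ioi_mem_nhds hy] with w hw
      rw [max_eq_left hw.out.le]
    convert (hasDerivAt_pow (k + 2) y).congr_of_eventuallyEq h using 1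
    rw [max_eq_left hy.le]; push_cast; ring

lemma B2_eq_max_zero_pow (t : ℝ) :
    B2 t = (max (t + 3/2) 0 ^ 2 - 3 * max (t + 1/2) 0 ^ 2 + 3 * max (t - 1/2) 0 ^ 2
      - max (t - 3/2) 0 ^ 2) / 2 := by
  rw [B2]
  rcases le_total 0 t with ht | ht <;> simp only [abs_of_nonneg, abs_of_nonpos, ht] <;>
    split_ifs <;> simp (disch := grind) only [max_eq_left, max_eq_right] <;> ring

lemma B3_eq_max_zero_pow (t : ℝ) :
    B3 t = (max (t + 2) 0 ^ 3 - 4 * max (t + 1) 0 ^ 3 + 6 * max t 0 ^ 3 - 4 * max (t - 1) 0 ^ 3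
      + max (t - 2) 0 ^ 3) / 6 := by
  rw [B3]
  rcases le_total 0 t with ht | ht <;> simp only [abs_of_nonneg, abs_of_nonpos, ht] <;>
    split_ifs <;> simp (disch := grind) only [max_eq_left, max_eq_right] <;> ring

lemma hasDerivAt_B3 (t : ℝ) : HasDerivAt B3 (B2 (t + 1/2) - B2 (t - 1/2)) t := by
  have d (a : ℝ) : HasDerivAt (fun y => max (y + a) 0 ^ 3) (3 * max (t + a) 0 ^ 2) t :=
    ((hasDerivAt_max_zero_pow 1 (t + a)).comp_add_const t a).congr_deriv (by norm_num)
  have h := ((((d 2).sub ((d 1).const_mul 4)).add ((d 0).const_mul 6)).sub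
    ((d (-1)).const_mul 4)).add (d (-2))
  have hB3 : B3 = fun y => (max (y + 2) 0 ^ 3 - 4 * max (y + 1) 0 ^ 3 + 6 * max (y + 0) 0 ^ 3
      - 4 * max (y + -1) 0 ^ 3 + max (y + -2) 0 ^ 3) / 6 := by
    funext y; rw [B3_eq_max_zero_pow]; ring_nf
  rw [hB3, B2_eq_max_zero_pow, B2_eq_max_zero_pow]
  refine (h.div_const 6).congr_deriv ?_
  ring_nf

lemma hasDerivAt_B3j (n j : ℤ) (u : ℝ) :
    HasDerivAt (B3j n j) (n * (B2j n j u - B2j n (j + 1) u)) u := by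
  have hin : HasDerivAt (fun u : ℝ => n * u - j - 2) n u := by
    simpa using ((hasDerivAt_id u).const_mul (n : ℝ)).sub_const ((j : ℝ) + 2)
  refine ((hasDerivAt_B3 _).comp u hin).congr_deriv ?_
  simp only [B2j]; push_cast; ring_nf

lemma B2_eq_zero_of_three_halves_le_abs {t : ℝ} (h : 3/2 ≤ |t|) : B2 t = 0 := by
  rw [B2, if_neg (by linarith)]
  split_ifs with h'
  · rw [le_antisymm h' h]; ring
  · rfl

lemma B2j_neg_three_eq_zero {n : ℤ} {u : ℝ} (h : 0 ≤ n * u) : B2j n (-3) u = 0 :=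
  B2_eq_zero_of_three_halves_le_abs <| by
    rw [abs_of_nonneg (by push_cast; linarith)]; push_cast; linarith

lemma B2j_self_eq_zero {n : ℤ} {u : ℝ} (h : n * u ≤ n) : B2j n n u = 0 :=
  B2_eq_zero_of_three_halves_le_abs (by rw [abs_of_nonpos (by linarith)]; linarith)

theorem sum_Icc_sub_mul_eq_sum_Icc_mul_sub {R : Type*} [CommRing R] {f g : ℤ → R} {a b : ℤ}
    (ha : f a = 0) (hb : f b = 0) :
    ∑ j ∈ Icc a (b - 1), (f j - f (j + 1)) * g j =
      ∑ j ∈ Icc (a + 1) (b - 1), f j * (g j - g (j - 1)) := by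
  have hdrop : ∑ j ∈ Icc a (b - 1), f j * g j = ∑ j ∈ Icc (a + 1) (b - 1), f j * g j := by
    refine (sum_subset (Icc_subset_Icc_left (by omega)) fun j hj hj' => ?_).symm
    obtain rfl : j = a := by simp only [mem_Icc] at hj hj'; omega
    rw [ha, zero_mul]
  have hshift : ∑ j ∈ Icc a (b - 1), f (j + 1) * g j =
      ∑ j ∈ Icc (a + 1) (b - 1), f j * g (j - 1) := by
    rw [sum_subset (Icc_subset_Icc_right (by omega) : Icc (a + 1) (b - 1) ⊆ Icc (a + 1) b) ?_,
      ← sub_add_cancel b 1, ← map_add_right_Icc, sum_map]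
    · simp
    · intro j hj hj'
      obtain rfl : j = b := by simp only [mem_Icc] at hj hj'; omega
      rw [hb, zero_mul]
  simp only [sub_mul, mul_sub, sum_sub_distrib, hdrop, hshift]

theorem hasDerivAt_sum_B3j_mul {n : ℤ} (hn : 0 ≤ n) {u : ℝ} (hu : u ∈ Set.Icc (0 : ℝ) 1)
    (c : ℤ → ℝ) :
    HasDerivAt (fun u' => ∑ j ∈ Icc (-3) (n - 1), B3j n j u' * c j)
      (∑ j ∈ Icc (-2) (n - 1), B2j n j u * (n * (c j - c (j - 1)))) u := by
  have hn' : (0 : ℝ) ≤ n := by exact_mod_cast hn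
  have h₀ : B2j n (-3) u = 0 := B2j_neg_three_eq_zero (mul_nonneg hn' hu.1)
  have h₁ : B2j n n u = 0 := B2j_self_eq_zero (mul_le_of_le_one_right hn' hu.2)
  refine (HasDerivAt.fun_sum fun j _ => (hasDerivAt_B3j n j u).mul_const (c j)).congr_deriv ?_
  calc ∑ j ∈ Icc (-3) (n - 1), n * (B2j n j u - B2j n (j + 1) u) * c j
      = ∑ j ∈ Icc (-3) (n - 1), (B2j n j u - B2j n (j + 1) u) * (n * c j) :=
        sum_congr rfl fun _ _ => by ring
    _ = ∑ j ∈ Icc (-3 + 1) (n - 1), B2j n j u * (n * c j - n * c (j - 1)) :=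
        sum_Icc_sub_mul_eq_sum_Icc_mul_sub (f := fun j => B2j n j u) h₀ h₁
    _ = ∑ j ∈ Icc (-2) (n - 1), B2j n j u * (n * (c j - c (j - 1))) := by
        norm_num [mul_sub]

noncomputable def quadSpline (n : ℤ) (ψ : ℤ → ℤ → ℤ → ℝ) (x y z : ℝ) : ℝ :=
  ∑ iX ∈ Icc (-2 : ℤ) (n-1), ∑ iY ∈ Icc (-2 : ℤ) (n-1), ∑ iZ ∈ Icc (-2 : ℤ) (n-1),
    B2j n iX x * B2j n iY y * B2j n iZ z * ψ iX iY iZ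

section

variable {n : ℤ} (φ : ℤ → ℤ → ℤ → ℝ) {x y z : ℝ}

theorem hasDerivAt_vX (hn : 0 ≤ n) (hx : x ∈ Set.Icc (0 : ℝ) 1) :
    HasDerivAt (fun x' => vX n φ x' y z)
      (quadSpline n (fun iX iY iZ => n * (φ iX iY iZ - φ (iX - 1) iY iZ)) x y z) x := by
  have hv : (fun x' => vX n φ x' y z) = fun x' => ∑ iX ∈ Icc (-3) (n - 1), B3j n iX x' *
      ∑ iY ∈ Icc (-2) (n - 1), ∑ iZ ∈ Icc (-2) (n - 1), B2j n iY y * B2j n iZ z * φ iX iY iZ := by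
    funext x'; simp only [vX, mul_sum, mul_assoc]
  rw [hv]
  refine (hasDerivAt_sum_B3j_mul hn hx _).congr_deriv ?_
  simp only [quadSpline, ← sum_sub_distrib, mul_sum]
  exact sum_congr rfl fun _ _ => sum_congr rfl fun _ _ => sum_congr rfl fun _ _ => by ring

theorem hasDerivAt_vY (hn : 0 ≤ n) (hy : y ∈ Set.Icc (0 : ℝ) 1) :
    HasDerivAt (fun y' => vY n φ x y' z)
      (quadSpline n (fun iX iY iZ => n * (φ iX iY iZ - φ iX (iY - 1) iZ)) x y z) y := by
  have hv : (fun y' => vY n φ x y' z) = fun y' => ∑ iX ∈ Icc (-2) (n - 1),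
      ∑ iY ∈ Icc (-3) (n - 1), B3j n iY y' *
        ∑ iZ ∈ Icc (-2) (n - 1), B2j n iX x * B2j n iZ z * φ iX iY iZ := by
    funext y'; simp only [vY, mul_sum]
    exact sum_congr rfl fun _ _ => sum_congr rfl fun _ _ => sum_congr rfl fun _ _ => by ring
  rw [hv]
  refine (HasDerivAt.fun_sum fun iX _ => hasDerivAt_sum_B3j_mul hn hy _).congr_deriv ?_
  simp only [quadSpline, ← sum_sub_distrib, mul_sum]
  exact sum_congr rfl fun _ _ => sum_congr rfl fun _ _ => sum_congr rfl fun _ _ => by ring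

theorem hasDerivAt_vZ (hn : 0 ≤ n) (hz : z ∈ Set.Icc (0 : ℝ) 1) :
    HasDerivAt (fun z' => vZ n φ x y z')
      (quadSpline n (fun iX iY iZ => n * (φ iX iY iZ - φ iX iY (iZ - 1))) x y z) z := by
  have hv : (fun z' => vZ n φ x y z') = fun z' => ∑ iX ∈ Icc (-2) (n - 1),
      ∑ iY ∈ Icc (-2) (n - 1), ∑ iZ ∈ Icc (-3) (n - 1), B3j n iZ z' *
        (B2j n iX x * B2j n iY y * φ iX iY iZ) := by
    funext z'
    exact sum_congr rfl fun _ _ => sum_congr rfl fun _ _ => sum_congr rfl fun _ _ => by ring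
  rw [hv]
  refine (HasDerivAt.fun_sum fun iX _ => HasDerivAt.fun_sum fun iY _ =>
    hasDerivAt_sum_B3j_mul hn hz _).congr_deriv ?_
  simp only [quadSpline]
  exact sum_congr rfl fun _ _ => sum_congr rfl fun _ _ => sum_congr rfl fun _ _ => by ring

end

theorem divergence_free_of_linear_constraints_general (n : ℤ) (hn : 3 < n)
    (φX φY φZ : ℤ → ℤ → ℤ → ℝ)
    (hcon : ∀ iX iY iZ : ℤ, iX ∈ Finset.Icc (-2 : ℤ) (n-1) →
      iY ∈ Finset.Icc (-2 : ℤ) (n-1) → iZ ∈ Finset.Icc (-2 : ℤ) (n-1) →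
      (n : ℝ) * (φX iX iY iZ - φX (iX - 1) iY iZ) +
      (n : ℝ) * (φY iX iY iZ - φY iX (iY - 1) iZ) +
      (n : ℝ) * (φZ iX iY iZ - φZ iX iY (iZ - 1)) = 0) :
    ∀ m ∈ Set.Icc (0:ℝ) 1 ×ˢ (Set.Icc (0:ℝ) 1 ×ˢ Set.Icc (0:ℝ) 1),
      divv n φX φY φZ m = 0 := by
  rintro ⟨x, y, z⟩ ⟨hx, hy, hz⟩
  have hn₀ : 0 ≤ n := by omega
  rw [divv, (hasDerivAt_vX φX hn₀ hx).deriv, (hasDerivAt_vY φY hn₀ hy).deriv,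
    (hasDerivAt_vZ φZ hn₀ hz).deriv]
  simp only [quadSpline, ← sum_add_distrib]
  refine sum_eq_zero fun iX hiX => sum_eq_zero fun iY hiY => sum_eq_zero fun iZ hiZ => ?_
  linear_combination (B2j n iX x * B2j n iY y * B2j n iZ z) * hcon iX iY iZ hiX hiY hiZ

/-- If the coefficients of a divergence-conforming B-spline velocity field of order 3
satisfy the sparse linear constraints
`n(φX_i - φX_{i-eX}) + n(φY_i - φY_{i-eY}) + n(φZ_i - φZ_{i-eZ}) = 0` for all indices
`i ∈ {-2,…,n-1}³`, then the velocity field is exactly divergence-free at every point of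
the continuous domain `[0,1]³`. -/
theorem divergence_free_of_linear_constraints (n : ℤ) (hn : 3 < n)
    (φX φY φZ : ℤ → ℤ → ℤ → ℝ)
    (hφX : ∀ iX iY iZ : ℤ,
      ¬(iX ∈ Finset.Icc (-3 : ℤ) (n-1) ∧ iY ∈ Finset.Icc (-2 : ℤ) (n-1) ∧
        iZ ∈ Finset.Icc (-2 : ℤ) (n-1)) → φX iX iY iZ = 0)
    (hφY : ∀ iX iY iZ : ℤ,
      ¬(iX ∈ Finset.Icc (-2 : ℤ) (n-1) ∧ iY ∈ Finset.Icc (-3 : ℤ) (n-1) ∧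
        iZ ∈ Finset.Icc (-2 : ℤ) (n-1)) → φY iX iY iZ = 0)
    (hφZ : ∀ iX iY iZ : ℤ,
      ¬(iX ∈ Finset.Icc (-2 : ℤ) (n-1) ∧ iY ∈ Finset.Icc (-2 : ℤ) (n-1) ∧
        iZ ∈ Finset.Icc (-3 : ℤ) (n-1)) → φZ iX iY iZ = 0)
    (hcon : ∀ iX iY iZ : ℤ, iX ∈ Finset.Icc (-2 : ℤ) (n-1) →
      iY ∈ Finset.Icc (-2 : ℤ) (n-1) → iZ ∈ Finset.Icc (-2 : ℤ) (n-1) →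
      (n : ℝ) * (φX iX iY iZ - φX (iX - 1) iY iZ) +
      (n : ℝ) * (φY iX iY iZ - φY iX (iY - 1) iZ) +
      (n : ℝ) * (φZ iX iY iZ - φZ iX iY (iZ - 1)) = 0) :
    ∀ m ∈ Set.Icc (0:ℝ) 1 ×ˢ (Set.Icc (0:ℝ) 1 ×ˢ Set.Icc (0:ℝ) 1),
      divv n φX φY φZ m = 0 :=
  divergence_free_of_linear_constraints_general n hn φX φY φZ hcon
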